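/- arXiv:2504.16495 — 4 statements merged into one kernel-verified Lean document; each statement's English description precedes it below -/
import Mathlib

section
/- Let (A, ·) be a perm algebra and (V, l, r) a representation of (A, ·). Then (V*, l*, l* − r*) is a representation of (A, ·), where l*(a) and r*(a) denote the dual maps of l(a) and r(a) acting on V*. -/
open TensorProduct

section
variable {K : Type*} [Field K] {A : Type*} [AddCommGroup A] [Module K A]

/-- perm identity for a plain binary operation -/
def IsPermFn {X : Type*} (mu : X → X → X) : Prop :=
  ∀ a b c : X, mu a (mu b c) = mu (mu a b) c ∧ mu (mu a b) c = mu (mu b a) c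

/-- perm algebra: bundled bilinear multiplication satisfying the perm identities -/
def IsPermMul (m : A →ₗ[K] A →ₗ[K] A) : Prop :=
  ∀ a b c : A, m a (m b c) = m (m a b) c ∧ m (m a b) c = m (m b a) c

/-- The map `T_r : A* → A` associated with a 2-tensor `r ∈ A ⊗ A`,
`T_r(a*) = Σ ⟨a*, a_i⟩ b_i` for `r = Σ a_i ⊗ b_i`. -/
noncomputable def Tten (r : A ⊗[K] A) : Module.Dual K A →ₗ[K] A :=
  TensorProduct.lift (LinearMap.mk₂ K
    (fun a b => (Module.Dual.eval K A a).smulRight b)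
    (by intro a a' b; ext f; simp [add_smul])
    (by intro c a b; ext f; simp [mul_smul])
    (by intro a b b'; ext f; simp [smul_add])
    (by intro c a b; ext f; simp [smul_comm c])) r

noncomputable def mulT (m : A →ₗ[K] A →ₗ[K] A) : A ⊗[K] A →ₗ[K] A := TensorProduct.lift m

noncomputable def p13_23 (m : A →ₗ[K] A →ₗ[K] A) :
    (A ⊗[K] A) ⊗[K] (A ⊗[K] A) →ₗ[K] (A ⊗[K] A) ⊗[K] A :=
  (TensorProduct.map LinearMap.id (mulT m)) ∘ₗ
    (TensorProduct.tensorTensorTensorComm K A A A A).toLinearMap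

noncomputable def p12_13 (m : A →ₗ[K] A →ₗ[K] A) :
    (A ⊗[K] A) ⊗[K] (A ⊗[K] A) →ₗ[K] (A ⊗[K] A) ⊗[K] A :=
  (TensorProduct.assoc K A A A).symm.toLinearMap ∘ₗ
    (TensorProduct.map (mulT m) LinearMap.id) ∘ₗ
    (TensorProduct.tensorTensorTensorComm K A A A A).toLinearMap

noncomputable def p13_12 (m : A →ₗ[K] A →ₗ[K] A) :
    (A ⊗[K] A) ⊗[K] (A ⊗[K] A) →ₗ[K] (A ⊗[K] A) ⊗[K] A :=
  (TensorProduct.assoc K A A A).symm.toLinearMap ∘ₗ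
    (TensorProduct.map (mulT m) (TensorProduct.comm K A A).toLinearMap) ∘ₗ
    (TensorProduct.tensorTensorTensorComm K A A A A).toLinearMap

noncomputable def p12_23 (m : A →ₗ[K] A →ₗ[K] A) :
    (A ⊗[K] A) ⊗[K] (A ⊗[K] A) →ₗ[K] (A ⊗[K] A) ⊗[K] A :=
  (TensorProduct.assoc K A A A).symm.toLinearMap ∘ₗ
    (TensorProduct.leftComm K A A A).toLinearMap ∘ₗ
    (TensorProduct.map (mulT m) LinearMap.id) ∘ₗ
    (TensorProduct.tensorTensorTensorComm K A A A A).toLinearMap ∘ₗ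
    (TensorProduct.map (TensorProduct.comm K A A).toLinearMap LinearMap.id)

/-- `[[r,r]] = r₁₂·r₂₃ − r₁₃·r₂₃ + r₁₂·r₁₃ − r₁₃·r₁₂` -/
noncomputable def ybrac (m : A →ₗ[K] A →ₗ[K] A) (r : A ⊗[K] A) : (A ⊗[K] A) ⊗[K] A :=
  p12_23 m (r ⊗ₜ r) - p13_23 m (r ⊗ₜ r) + p12_13 m (r ⊗ₜ r) - p13_12 m (r ⊗ₜ r)

/-- the perm Yang-Baxter equation -/
noncomputable def IsPYBESol (m : A →ₗ[K] A →ₗ[K] A) (r : A ⊗[K] A) : Prop := ybrac m r = 0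

/-- `(id ⊗ R(a) − ad(a) ⊗ id)(s) = 0` for all `a`. -/
def RadInv (m : A →ₗ[K] A →ₗ[K] A) (s : A ⊗[K] A) : Prop :=
  ∀ a : A, TensorProduct.map LinearMap.id (m.flip a) s
    = TensorProduct.map (m a - m.flip a) LinearMap.id s

variable {V : Type*} [AddCommGroup V] [Module K V]

/-- representation of a perm algebra -/
def IsPermRep (m : A →ₗ[K] A →ₗ[K] A) (l rr : A →ₗ[K] V →ₗ[K] V) : Prop :=
  ∀ a b : A, l (m a b) = l a ∘ₗ l b ∧ l a ∘ₗ l b = l b ∘ₗ l a ∧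
    rr (m a b) = rr b ∘ₗ rr a ∧ rr b ∘ₗ rr a = rr b ∘ₗ l a ∧ rr b ∘ₗ l a = l a ∘ₗ rr b

/-- A-perm algebra -/
def IsAPermAlg (m : A →ₗ[K] A →ₗ[K] A) (l rr : A →ₗ[K] V →ₗ[K] V)
    (mV : V →ₗ[K] V →ₗ[K] V) : Prop :=
  IsPermRep m l rr ∧ IsPermMul mV ∧
  (∀ (a : A) (u w : V), rr a (mV u w) = rr a (mV w u) ∧ rr a (mV u w) = mV u (rr a w)) ∧
  (∀ (a : A) (u w : V), mV (l a u) w = mV (rr a u) w ∧ mV (l a u) w = l a (mV u w) ∧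
    l a (mV u w) = mV u (l a w))

/-!
Transposition `f ↦ f*` is linear and reverses composition, so every identity required of
`(l*, l* - r*)` is the transpose of an identity in `End V`. Expanding `(l_b* - r_b*)(l_a* - r_a*)`
produces the extra term `(r_a r_b - r_a l_b)*`, which vanishes by the representation axiom for
the pair `(b, a)`.
-/

local notation "T" => Module.Dual.transpose (R := K) (M := V) (M' := V)

lemma transpose_sub_comp_transpose_sub (f g u v : V →ₗ[K] V) :
    (T f - T g) ∘ₗ (T u - T v) = T (u ∘ₗ f - u ∘ₗ g - (v ∘ₗ f - v ∘ₗ g)) := by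
  simp only [LinearMap.sub_comp, LinearMap.comp_sub, ← Module.Dual.transpose_comp, map_sub]

namespace IsPermRep

variable {m : A →ₗ[K] A →ₗ[K] A} {l rr : A →ₗ[K] V →ₗ[K] V}

/-- The right action `l* - r*` is given pointwise, since instance search does not find the `Sub`
on `A →ₗ[K] Module.Dual K V →ₗ[K] Module.Dual K V`. -/
theorem dual (h : IsPermRep m l rr) {R : A →ₗ[K] Module.Dual K V →ₗ[K] Module.Dual K V}
    (hR : ∀ a, R a = T (l a) - T (rr a)) :
    IsPermRep m (T ∘ₗ l) R := by
  intro a b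
  obtain ⟨hl_mul, hl_comm, hr_mul, hr_right, hr_left⟩ := h a b
  have hr_right_swap : rr a ∘ₗ rr b = rr a ∘ₗ l b := (h b a).2.2.2.1
  simp only [LinearMap.comp_apply, hR]
  refine ⟨?_, ?_, ?_, ?_, ?_⟩
  · rw [hl_mul, hl_comm, Module.Dual.transpose_comp]
  · rw [← Module.Dual.transpose_comp, ← Module.Dual.transpose_comp, hl_comm]
  · rw [transpose_sub_comp_transpose_sub, hl_mul, hr_mul, hr_right, hr_left, hr_right_swap, sub_self,
      sub_zero, map_sub]
  · rw [transpose_sub_comp_transpose_sub, hr_right_swap, sub_self, sub_zero, LinearMap.sub_comp,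
      ← Module.Dual.transpose_comp, ← Module.Dual.transpose_comp, map_sub]
  · rw [LinearMap.sub_comp, LinearMap.comp_sub, ← Module.Dual.transpose_comp,
      ← Module.Dual.transpose_comp, ← Module.Dual.transpose_comp, ← Module.Dual.transpose_comp,
      hl_comm, hr_left]

end IsPermRep

theorem stmt1_general {V : Type*} [AddCommGroup V] [Module K V]
    (m : A →ₗ[K] A →ₗ[K] A)
    (l rr : A →ₗ[K] V →ₗ[K] V) (h : IsPermRep m l rr) :
    IsPermRep m (Module.Dual.transpose (R := K) ∘ₗ l)
      (@HSub.hSub _ _ _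
        (@instHSub _ (LinearMap.addCommGroup (N₂ := (V →ₗ[K] K) →ₗ[K] (V →ₗ[K] K))).toSub)
        (Module.Dual.transpose (R := K) ∘ₗ l : A →ₗ[K] (V →ₗ[K] K) →ₗ[K] (V →ₗ[K] K))
        (Module.Dual.transpose (R := K) ∘ₗ rr : A →ₗ[K] (V →ₗ[K] K) →ₗ[K] (V →ₗ[K] K))) :=
  h.dual fun _ => rfl

theorem stmt1 {V : Type*} [AddCommGroup V] [Module K V] [FiniteDimensional K A]
    [FiniteDimensional K V]
    (m : A →ₗ[K] A →ₗ[K] A) (hm : IsPermMul m)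
    (l rr : A →ₗ[K] V →ₗ[K] V) (h : IsPermRep m l rr) :
    IsPermRep m (Module.Dual.transpose (R := K) ∘ₗ l)
      (@HSub.hSub _ _ _
        (@instHSub _ (LinearMap.addCommGroup (N₂ := (V →ₗ[K] K) →ₗ[K] (V →ₗ[K] K))).toSub)
        (Module.Dual.transpose (R := K) ∘ₗ l : A →ₗ[K] (V →ₗ[K] K) →ₗ[K] (V →ₗ[K] K))
        (Module.Dual.transpose (R := K) ∘ₗ rr : A →ₗ[K] (V →ₗ[K] K) →ₗ[K] (V →ₗ[K] K))) :=
  stmt1_general m l rr h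

end
end

section
/- Let (A, ·_A) and (V, ·_V) be perm algebras and l, r: A → End(V) linear maps. Then (V, l, r, ·_V) is an A-perm algebra if and only if A ⊕ V with multiplication (a+u)·(b+v) = a·_A b + l(a)v + r(b)u + u·_V v is a perm algebra. -/
open TensorProduct

section
variable {K : Type*} [Field K] {A : Type*} [AddCommGroup A] [Module K A]

variable {V : Type*} [AddCommGroup V] [Module K V]

/-!
Both perm identities of `A ⊕ V` are trilinear, so they hold as soon as they hold on triples of
elements each lying in `A` or in `V`. On such a triple the `A`-component is a perm identity of
`A` (or zero), and the `V`-component is precisely one of the axioms of an `A`-perm algebra: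
those of the representation for one argument in `V`, the compatibilities for two, and the perm
identities of `V` for three.
-/

section SemidirectProduct

variable {m : A →ₗ[K] A →ₗ[K] A} {l rr : A →ₗ[K] V →ₗ[K] V} {mV : V →ₗ[K] V →ₗ[K] V}

theorem isPermRep_iff_apply :
    IsPermRep m l rr ↔ ∀ (a b : A) (v : V),
      l (m a b) v = l a (l b v) ∧ l a (l b v) = l b (l a v) ∧
      rr (m a b) v = rr b (rr a v) ∧ rr b (rr a v) = rr b (l a v) ∧
      rr b (l a v) = l a (rr b v) := by
  simp only [IsPermRep, LinearMap.ext_iff, LinearMap.comp_apply, forall_and]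

variable (m l rr mV) in
def semidirectMul (p q : A × V) : A × V :=
  (m p.1 q.1, l p.1 q.2 + rr q.1 p.2 + mV p.2 q.2)

theorem semidirectMul_assoc (hm : IsPermMul m) (h : IsAPermAlg m l rr mV) (p q s : A × V) :
    semidirectMul m l rr mV p (semidirectMul m l rr mV q s) =
      semidirectMul m l rr mV (semidirectMul m l rr mV p q) s := by
  obtain ⟨a, u⟩ := p
  obtain ⟨b, v⟩ := q
  obtain ⟨c, w⟩ := s
  obtain ⟨hrep, hV, hr, hl⟩ := h
  have hrep := isPermRep_iff_apply.mp hrep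
  refine Prod.ext (hm a b c).1 ?_
  simp only [semidirectMul, map_add, LinearMap.add_apply]
  rw [(hrep a b w).1, (hrep a c v).2.2.2.2, ← (hrep b c u).2.2.1, (hr c u v).2, (hl a v w).2.1,
    ← (hl b u w).1, (hl b u w).2.1, (hl b u w).2.2, (hV u v w).1]
  abel

theorem semidirectMul_comm_mul (hm : IsPermMul m) (h : IsAPermAlg m l rr mV)
    (p q s : A × V) :
    semidirectMul m l rr mV (semidirectMul m l rr mV p q) s =
      semidirectMul m l rr mV (semidirectMul m l rr mV q p) s := by
  obtain ⟨a, u⟩ := p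
  obtain ⟨b, v⟩ := q
  obtain ⟨c, w⟩ := s
  obtain ⟨hrep, hV, hr, hl⟩ := h
  have hrep := isPermRep_iff_apply.mp hrep
  refine Prod.ext (hm a b c).2 ?_
  simp only [semidirectMul, map_add, LinearMap.add_apply]
  rw [(hrep a b w).1, (hrep a b w).2.1, ← (hrep b a w).1, (hrep a c v).2.2.2.1,
    (hrep b c u).2.2.2.1, (hr c u v).1, ← (hl a v w).1, ← (hl b u w).1, (hV v u w).2]
  abel

theorem isPermFn_semidirectMul (hm : IsPermMul m) (h : IsAPermAlg m l rr mV) :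
    IsPermFn (semidirectMul m l rr mV) := fun p q s =>
  ⟨semidirectMul_assoc hm h p q s, semidirectMul_comm_mul hm h p q s⟩

theorem isAPermAlg_of_isPermFn_semidirectMul (h : IsPermFn (semidirectMul m l rr mV)) :
    IsAPermAlg m l rr mV := by
  have assoc p q s := congrArg Prod.snd (h p q s).1
  have comm p q s := congrArg Prod.snd (h p q s).2
  simp only [semidirectMul] at assoc comm
  refine ⟨isPermRep_iff_apply.mpr fun a b v => ⟨?_, ?_, ?_, ?_, ?_⟩, fun u v w => ⟨?_, ?_⟩,
    fun a u w => ⟨?_, ?_⟩, fun a u w => ⟨?_, ?_, ?_⟩⟩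
  · simpa using (assoc (a, 0) (b, 0) (0, v)).symm
  · simpa using ((assoc (a, 0) (b, 0) (0, v)).trans (comm (a, 0) (b, 0) (0, v))).trans
      (assoc (b, 0) (a, 0) (0, v)).symm
  · simpa using assoc (0, v) (a, 0) (b, 0)
  · simpa using comm (0, v) (a, 0) (b, 0)
  · simpa using (assoc (a, 0) (0, v) (b, 0)).symm
  · simpa using assoc (0, u) (0, v) (0, w)
  · simpa using comm (0, u) (0, v) (0, w)
  · simpa using comm (0, u) (0, w) (a, 0)
  · simpa using (assoc (0, u) (0, w) (a, 0)).symm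
  · simpa using comm (a, 0) (0, u) (0, w)
  · simpa using (assoc (a, 0) (0, u) (0, w)).symm
  · simpa using ((assoc (a, 0) (0, u) (0, w)).trans (comm (a, 0) (0, u) (0, w))).trans
      (assoc (0, u) (a, 0) (0, w)).symm

end SemidirectProduct

theorem stmt3_general {V : Type*} [AddCommGroup V] [Module K V]
    (m : A →ₗ[K] A →ₗ[K] A) (mV : V →ₗ[K] V →ₗ[K] V)
    (hm : IsPermMul m)
    (l rr : A →ₗ[K] V →ₗ[K] V) :
    IsAPermAlg m l rr mV ↔
      IsPermFn (fun p q : A × V =>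
        (m p.1 q.1, l p.1 q.2 + rr q.1 p.2 + mV p.2 q.2)) :=
  ⟨isPermFn_semidirectMul hm, isAPermAlg_of_isPermFn_semidirectMul⟩

theorem stmt3 {V : Type*} [AddCommGroup V] [Module K V]
    (m : A →ₗ[K] A →ₗ[K] A) (mV : V →ₗ[K] V →ₗ[K] V)
    (hm : IsPermMul m) (hV : IsPermMul mV)
    (l rr : A →ₗ[K] V →ₗ[K] V) :
    IsAPermAlg m l rr mV ↔
      IsPermFn (fun p q : A × V =>
        (m p.1 q.1, l p.1 q.2 + rr q.1 p.2 + mV p.2 q.2)) :=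
  stmt3_general m mV hm l rr

end
end

section
/- Let (A, ·) be a perm algebra and r ∈ A ⊗ A an element whose skew-symmetric part r − σ(r) satisfies (id ⊗ R(a) − ad(a) ⊗ id)(r − σ(r)) = 0 for all a ∈ A. Then r is a solution of the perm Yang-Baxter equation if and only if σ(r) is a solution of the perm Yang-Baxter equation. -/
/-!
Write `r = Σ aᵢ ⊗ bᵢ` and `s = r - σ(r)`. Expanding both brackets gives
`[[σ(r)]] = τ [[r]] - γ [[r]] + Σᵢ bᵢ ⊗ (id ⊗ R(aᵢ) - ad(aᵢ) ⊗ id)(s)`, where `τ` reverses and `γ`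
cyclically permutes the three tensor factors. The hypothesis kills the last sum, so `[[r]] = 0`
forces `[[σ(r)]] = 0`; the converse is the same argument for `σ(r)`, since `σ` is an involution
and `σ(r) - r = -s` satisfies the hypothesis as well. The identity is quadratic in `r`, so it is
checked on pure tensors for the polarization `r ⊗ r' ↦ [[r, r']]`; there the correction term
splits into `r'` acting on `r - σ(r)` and `r` acting on `r' - σ(r')`, which recombine to the sum
above at `r' = r`.
-/

open TensorProduct

section
variable {K : Type*} [Field K] {A : Type*} [AddCommGroup A] [Module K A]

variable {V : Type*} [AddCommGroup V] [Module K V]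

section

variable {R M N P : Type*} [CommSemiring R] [AddCommMonoid M] [AddCommMonoid N] [AddCommMonoid P]
  [Module R M] [Module R N] [Module R P]

noncomputable def legAct (Ψ : M →ₗ[R] N →ₗ[R] P) : (M ⊗[R] M) ⊗[R] N →ₗ[R] M ⊗[R] P :=
  LinearMap.lTensor M (TensorProduct.lift Ψ) ∘ₗ (TensorProduct.assoc R M M N).toLinearMap ∘ₗ
    LinearMap.rTensor N (TensorProduct.comm R M M).toLinearMap

@[simp]
theorem legAct_tmul_tmul (Ψ : M →ₗ[R] N →ₗ[R] P) (a b : M) (n : N) :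
    legAct Ψ ((a ⊗ₜ b) ⊗ₜ n) = b ⊗ₜ Ψ a n := rfl

theorem legAct_tmul_congr {Ψ Ψ' : M →ₗ[R] N →ₗ[R] P} {n : N} (h : ∀ a, Ψ a n = Ψ' a n)
    (r : M ⊗[R] M) : legAct Ψ (r ⊗ₜ n) = legAct Ψ' (r ⊗ₜ n) := by
  induction r using TensorProduct.induction_on with
  | zero => simp
  | tmul a b => simp [h]
  | add r r' hr hr' => simp only [TensorProduct.add_tmul, map_add, hr, hr']

noncomputable def tensorReverse : (M ⊗[R] M) ⊗[R] M →ₗ[R] (M ⊗[R] M) ⊗[R] M :=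
  (TensorProduct.assoc R M M M).symm.toLinearMap ∘ₗ
    LinearMap.lTensor M (TensorProduct.comm R M M).toLinearMap ∘ₗ
    (TensorProduct.comm R (M ⊗[R] M) M).toLinearMap

@[simp]
theorem tensorReverse_tmul (u v w : M) : tensorReverse ((u ⊗ₜ[R] v) ⊗ₜ w) = (w ⊗ₜ v) ⊗ₜ u := rfl

noncomputable def tensorCycle : (M ⊗[R] M) ⊗[R] M →ₗ[R] (M ⊗[R] M) ⊗[R] M :=
  (TensorProduct.assoc R M M M).symm.toLinearMap ∘ₗ
    (TensorProduct.comm R (M ⊗[R] M) M).toLinearMap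

@[simp]
theorem tensorCycle_tmul (u v w : M) : tensorCycle ((u ⊗ₜ[R] v) ⊗ₜ w) = (w ⊗ₜ u) ⊗ₜ v := rfl

end

noncomputable def rightMulDeriv (m : A →ₗ[K] A →ₗ[K] A) : A →ₗ[K] A ⊗[K] A →ₗ[K] A ⊗[K] A :=
  LinearMap.lTensorHom A ∘ₗ m.flip + LinearMap.rTensorHom A ∘ₗ m.flip

noncomputable def leftMulFirst (m : A →ₗ[K] A →ₗ[K] A) : A →ₗ[K] A ⊗[K] A →ₗ[K] A ⊗[K] A :=
  LinearMap.rTensorHom A ∘ₗ m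

theorem RadInv.rightMulDeriv_eq {m : A →ₗ[K] A →ₗ[K] A} {s : A ⊗[K] A} (h : RadInv m s) (a : A) :
    rightMulDeriv m a s = leftMulFirst m a s := by
  change (m.flip a).lTensor A s + (m.flip a).rTensor A s = (m a).rTensor A s
  rw [LinearMap.lTensor, h a, ← LinearMap.rTensor, LinearMap.rTensor_sub, LinearMap.sub_apply,
    sub_add_cancel]

theorem RadInv.neg {m : A →ₗ[K] A →ₗ[K] A} {s : A ⊗[K] A} (h : RadInv m s) : RadInv m (-s) := by
  intro a
  rw [map_neg, map_neg, h a]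

noncomputable def ybracPolar (m : A →ₗ[K] A →ₗ[K] A) :
    (A ⊗[K] A) ⊗[K] (A ⊗[K] A) →ₗ[K] (A ⊗[K] A) ⊗[K] A :=
  p12_23 m - p13_23 m + p12_13 m - p13_12 m

theorem ybrac_eq_ybracPolar (m : A →ₗ[K] A →ₗ[K] A) (r : A ⊗[K] A) :
    ybrac m r = ybracPolar m (r ⊗ₜ r) := rfl

theorem ybracPolar_comm_comm (m : A →ₗ[K] A →ₗ[K] A) :
    ybracPolar m ∘ₗ TensorProduct.map (TensorProduct.comm K A A).toLinearMap
        (TensorProduct.comm K A A).toLinearMap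
      + tensorCycle ∘ₗ ybracPolar m - tensorReverse ∘ₗ ybracPolar m
    = (TensorProduct.assoc K A A A).symm.toLinearMap ∘ₗ
      (legAct (rightMulDeriv m) ∘ₗ
          LinearMap.lTensor (A ⊗[K] A) (LinearMap.id - (TensorProduct.comm K A A).toLinearMap) ∘ₗ
          (TensorProduct.comm K (A ⊗[K] A) (A ⊗[K] A)).toLinearMap
        - legAct (leftMulFirst m) ∘ₗ
          LinearMap.lTensor (A ⊗[K] A) (LinearMap.id - (TensorProduct.comm K A A).toLinearMap)) := by
  apply TensorProduct.ext_fourfold'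
  intro x₁ x₂ y₁ y₂
  simp [ybracPolar, p12_23, p13_23, p12_13, p13_12, mulT, rightMulDeriv, leftMulFirst,
    TensorProduct.tmul_add]
  abel

theorem ybrac_comm (m : A →ₗ[K] A →ₗ[K] A) (r : A ⊗[K] A) :
    ybrac m (TensorProduct.comm K A A r)
      = tensorReverse (ybrac m r) - tensorCycle (ybrac m r)
        + (TensorProduct.assoc K A A A).symm
          (legAct (rightMulDeriv m) (r ⊗ₜ (r - TensorProduct.comm K A A r))
            - legAct (leftMulFirst m) (r ⊗ₜ (r - TensorProduct.comm K A A r))) := by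
  have h := LinearMap.congr_fun (ybracPolar_comm_comm m) (r ⊗ₜ r)
  simp only [LinearMap.add_apply, LinearMap.sub_apply, LinearMap.comp_apply, LinearEquiv.coe_coe,
    TensorProduct.map_tmul, TensorProduct.comm_tmul, LinearMap.lTensor_tmul,
    LinearMap.id_apply] at h
  rw [ybrac_eq_ybracPolar, ybrac_eq_ybracPolar, ← h]
  abel

theorem ybrac_comm_of_radInv {m : A →ₗ[K] A →ₗ[K] A} {r : A ⊗[K] A}
    (hinv : RadInv m (r - TensorProduct.comm K A A r)) :
    ybrac m (TensorProduct.comm K A A r) = tensorReverse (ybrac m r) - tensorCycle (ybrac m r) := by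
  rw [ybrac_comm, legAct_tmul_congr hinv.rightMulDeriv_eq, sub_self, map_zero, add_zero]

theorem IsPYBESol.comm {m : A →ₗ[K] A →ₗ[K] A} {r : A ⊗[K] A} (h : IsPYBESol m r)
    (hinv : RadInv m (r - TensorProduct.comm K A A r)) :
    IsPYBESol m (TensorProduct.comm K A A r) := by
  rw [IsPYBESol, ybrac_comm_of_radInv hinv, h, map_zero, map_zero, sub_zero]

theorem stmt4_general (m : A →ₗ[K] A →ₗ[K] A) (r : A ⊗[K] A)
    (hinv : RadInv m (r - (TensorProduct.comm K A A) r)) :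
    IsPYBESol m r ↔ IsPYBESol m ((TensorProduct.comm K A A) r) := by
  refine ⟨fun h => h.comm hinv, fun h => ?_⟩
  have hinv' : RadInv m (TensorProduct.comm K A A r - TensorProduct.comm K A A
      (TensorProduct.comm K A A r)) := by
    simpa only [TensorProduct.comm_comm, neg_sub] using hinv.neg
  simpa only [TensorProduct.comm_comm] using h.comm hinv'

theorem stmt4 (m : A →ₗ[K] A →ₗ[K] A) (hm : IsPermMul m) (r : A ⊗[K] A)
    (hinv : RadInv m (r - (TensorProduct.comm K A A) r)) :
    IsPYBESol m r ↔ IsPYBESol m ((TensorProduct.comm K A A) r) :=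
  stmt4_general m r hinv

end
end

section
/- Let (A, ·) be a perm algebra and r ∈ A ⊗ A, with Tᵣ: A* → A the linear map defined by ⟨Tᵣ(a*), b*⟩ = ⟨r, a* ⊗ b*⟩. Then r is a solution of the perm Yang-Baxter equation in (A, ·) if and only if Tᵣ(a*) · Tᵣ(b*) = Tᵣ(L*(Tᵣ(a*))b* + ad*(T_{σ(r)}(b*))a*) for all a*, b* ∈ A*. -/
/-!
Pair `[[r,r]]` with `a* ⊗ b*` in its first two tensor factors. Term by term, `r₁₂·r₂₃`, `r₁₃·r₂₃`,
`r₁₂·r₁₃` and `r₁₃·r₁₂` become `T_r(L*(T_r a*) b*)`, `T_r(a*)·T_r(b*)`, `T_r(L*(T_{σ(r)} b*) a*)`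
and `T_r(R*(T_{σ(r)} b*) a*)`, so the pairing of `[[r,r]]` is the difference of the two sides of the
claimed identity. Over a field these pairings separate the points of `A ⊗ A ⊗ A`.
-/

open TensorProduct

section
variable {K : Type*} [Field K] {A : Type*} [AddCommGroup A] [Module K A]

variable {V : Type*} [AddCommGroup V] [Module K V]

section Contraction

variable {R M N P : Type*} [CommRing R] [AddCommGroup M] [Module R M] [AddCommGroup N]
  [Module R N] [AddCommGroup P] [Module R P]

noncomputable def contractFst (f : Module.Dual R M) : M ⊗[R] N →ₗ[R] N :=
  TensorProduct.lid R N ∘ₗ f.rTensor N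

@[simp] lemma contractFst_tmul (f : Module.Dual R M) (x : M) (y : N) :
    contractFst f (x ⊗ₜ y) = f x • y := by
  simp [contractFst]

lemma eq_zero_of_forall_contractFst_eq_zero [Module.Free R M] {t : M ⊗[R] N}
    (h : ∀ f : Module.Dual R M, contractFst f t = 0) : t = 0 := by
  classical
  let ℬ := Module.Free.chooseBasis R M
  apply (TensorProduct.equivFinsuppOfBasisLeft ℬ).injective
  ext i
  simpa [contractFst, TensorProduct.equivFinsuppOfBasisLeft_apply] using h (ℬ.coord i)

noncomputable def contract12 (f : Module.Dual R M) (g : Module.Dual R N) :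
    (M ⊗[R] N) ⊗[R] P →ₗ[R] P :=
  contractFst g ∘ₗ contractFst f ∘ₗ (TensorProduct.assoc R M N P).toLinearMap

@[simp] lemma contract12_tmul (f : Module.Dual R M) (g : Module.Dual R N) (x : M) (y : N)
    (z : P) : contract12 f g ((x ⊗ₜ y) ⊗ₜ z) = f x • g y • z := by
  simp [contract12]

lemma eq_zero_of_forall_contract12_eq_zero [Module.Free R M] [Module.Free R N]
    {t : (M ⊗[R] N) ⊗[R] P} (h : ∀ f g, contract12 f g t = 0) : t = 0 :=
  (TensorProduct.assoc R M N P).map_eq_zero_iff.mp <|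
    eq_zero_of_forall_contractFst_eq_zero fun f =>
      eq_zero_of_forall_contractFst_eq_zero fun g => h f g

end Contraction

@[simp] lemma Tten_tmul (x y : A) (f : Module.Dual K A) : Tten (x ⊗ₜ y) f = f x • y := by
  simp [Tten]

@[simp] lemma Tten_add (r s : A ⊗[K] A) : Tten (r + s) = Tten r + Tten s := by
  simp [Tten]

@[simp] lemma Tten_zero : Tten (0 : A ⊗[K] A) = 0 := by
  simp [Tten]

section Components

variable (m : A →ₗ[K] A →ₗ[K] A) (r s : A ⊗[K] A) (f g : Module.Dual K A)

lemma contract12_p12_23 :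
    contract12 f g (p12_23 m (r ⊗ₜ s)) = Tten s ((m (Tten r f)).dualMap g) := by
  induction r using TensorProduct.induction_on with
  | zero => simp [LinearMap.dualMap_def]
  | add r₁ r₂ h₁ h₂ => simp [add_tmul, h₁, h₂, LinearMap.dualMap_def]
  | tmul a b =>
    induction s using TensorProduct.induction_on with
    | zero => simp
    | add s₁ s₂ h₁ h₂ => simp [tmul_add, h₁, h₂]
    | tmul c d => simp [p12_23, mulT, smul_smul]

lemma contract12_p13_23 :
    contract12 f g (p13_23 m (r ⊗ₜ s)) = m (Tten r f) (Tten s g) := by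
  induction r using TensorProduct.induction_on with
  | zero => simp
  | add r₁ r₂ h₁ h₂ => simp [add_tmul, h₁, h₂]
  | tmul a b =>
    induction s using TensorProduct.induction_on with
    | zero => simp
    | add s₁ s₂ h₁ h₂ => simp [tmul_add, h₁, h₂]
    | tmul c d => simp [p13_23, mulT, smul_smul, mul_comm]

lemma contract12_p12_13 :
    contract12 f g (p12_13 m (r ⊗ₜ s))
      = Tten s ((m (Tten (TensorProduct.comm K A A r) g)).dualMap f) := by
  induction r using TensorProduct.induction_on with
  | zero => simp [LinearMap.dualMap_def]
  | add r₁ r₂ h₁ h₂ => simp [add_tmul, h₁, h₂, LinearMap.dualMap_def]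
  | tmul a b =>
    induction s using TensorProduct.induction_on with
    | zero => simp
    | add s₁ s₂ h₁ h₂ => simp [tmul_add, h₁, h₂]
    | tmul c d => simp [p12_13, mulT, smul_smul, mul_comm]

lemma contract12_p13_12 :
    contract12 f g (p13_12 m (r ⊗ₜ s))
      = Tten r ((m.flip (Tten (TensorProduct.comm K A A s) g)).dualMap f) := by
  induction r using TensorProduct.induction_on with
  | zero => simp
  | add r₁ r₂ h₁ h₂ => simp [add_tmul, h₁, h₂]
  | tmul a b =>
    induction s using TensorProduct.induction_on with
    | zero => simp [LinearMap.dualMap_def]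
    | add s₁ s₂ h₁ h₂ => simp [tmul_add, h₁, h₂, LinearMap.dualMap_def, add_smul]
    | tmul c d => simp [p13_12, mulT, smul_smul, mul_comm]

end Components

lemma contract12_ybrac (m : A →ₗ[K] A →ₗ[K] A) (r : A ⊗[K] A) (f g : Module.Dual K A) :
    contract12 f g (ybrac m r)
      = Tten r ((m (Tten r f)).dualMap g
          + (m (Tten (TensorProduct.comm K A A r) g)
             - m.flip (Tten (TensorProduct.comm K A A r) g)).dualMap f)
        - m (Tten r f) (Tten r g) := by
  simp only [ybrac, map_add, map_sub, contract12_p12_23, contract12_p13_23, contract12_p12_13,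
    contract12_p13_12, LinearMap.dualMap_def, LinearMap.sub_apply]
  abel

theorem stmt5_general (m : A →ₗ[K] A →ₗ[K] A)
    (r : A ⊗[K] A) :
    IsPYBESol m r ↔
      ∀ f g : Module.Dual K A,
        m (Tten r f) (Tten r g)
          = Tten r ((m (Tten r f)).dualMap g
              + (m (Tten ((TensorProduct.comm K A A) r) g)
                 - m.flip (Tten ((TensorProduct.comm K A A) r) g)).dualMap f) := by
  simp only [IsPYBESol, eq_comm (a := m _ _), ← sub_eq_zero (b := m _ _), ← contract12_ybrac]
  exact ⟨fun h f g => by rw [h, map_zero], eq_zero_of_forall_contract12_eq_zero⟩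

theorem stmt5 [FiniteDimensional K A] (m : A →ₗ[K] A →ₗ[K] A) (hm : IsPermMul m)
    (r : A ⊗[K] A) :
    IsPYBESol m r ↔
      ∀ f g : Module.Dual K A,
        m (Tten r f) (Tten r g)
          = Tten r ((m (Tten r f)).dualMap g
              + (m (Tten ((TensorProduct.comm K A A) r) g)
                 - m.flip (Tten ((TensorProduct.comm K A A) r) g)).dualMap f) :=
  stmt5_general m r

end
end
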